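/- arXiv:2311.04852 — 3 statements merged into one kernel-verified Lean document; each statement's English description precedes it below -/
import Mathlib

section
/- Let $A_t \in \mathbb{R}^{n\times n}$, $B_t \in \mathbb{R}^{n\times m}$, $C_t \in \mathbb{R}^{p\times n}$ define the LTV system $\delta x_t = A_{t-1}\delta x_{t-1} + B_{t-1}\delta u_{t-1}$, $\delta z_t = C_t \delta x_t$. Define the observability-type matrix $O^q = [ (A_{t-q}^T \cdots A_{t-2}^T C_{t-1}^T), \ldots, (A_{t-q}^T C_{t-q+1}^T), C_{t-q}^T ]^T$ (stacked vertically). If $O^q$ has full column rank, then there exist matrices $\alpha_{t-1},\ldots,\alpha_{t-q}$ and $\beta_{t-1},\ldots,\beta_{t-q}$ such that for every trajectory of the LTV system, $\delta z_t = \sum_{i=1}^q \alpha_{t-i}\,\delta z_{t-i} + \sum_{i=1}^q \beta_{t-i}\,\delta u_{t-i}$. -/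
open Matrix Finset

/-- Transition matrix product `A (k+j-1) * ⋯ * A k`. -/
noncomputable def transMat (n : ℕ) (A : ℕ → Matrix (Fin n) (Fin n) ℝ) (k : ℕ) :
    ℕ → Matrix (Fin n) (Fin n) ℝ
  | 0 => 1
  | j + 1 => A (k + j) * transMat n A k j


private lemma mulVec_sum' {a b : Type*} [Fintype b] {ι : Type*} (M : Matrix a b ℝ)
    (s : Finset ι) (f : ι → b → ℝ) :
    M *ᵥ (∑ k ∈ s, f k) = ∑ k ∈ s, M *ᵥ f k := by
  simp only [← Matrix.mulVecLin_apply]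
  exact map_sum _ _ _

private lemma sum_mulVec' {a b : Type*} [Fintype b] {ι : Type*}
    (s : Finset ι) (F : ι → Matrix a b ℝ) (v : b → ℝ) :
    (∑ k ∈ s, F k) *ᵥ v = ∑ k ∈ s, (F k) *ᵥ v := by
  funext i
  simp only [Matrix.mulVec, dotProduct, Matrix.sum_apply, Finset.sum_apply,
    Finset.sum_mul]
  rw [Finset.sum_comm]

/-- If the stacked observability-type matrix `O^q` of the LTV system
`δx_{k+1} = A_k δx_k + B_k δu_k`, `δz_k = C_k δx_k` has full column rank
(i.e. admits a left inverse), then there exist ARMA coefficients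
`α, β` such that every trajectory satisfies the exact order-`q` ARMA relation.
Time is shifted so that `t - q` corresponds to `0` and `t` to `q`. -/
theorem arma_representation_of_fullRank
    (n m p q : ℕ) (hq : 0 < q)
    (A : ℕ → Matrix (Fin n) (Fin n) ℝ)
    (B : ℕ → Matrix (Fin n) (Fin m) ℝ)
    (C : ℕ → Matrix (Fin p) (Fin n) ℝ)
    (Φ : ℕ → Matrix (Fin n) (Fin n) ℝ)
    (hΦ0 : Φ 0 = 1) (hΦ : ∀ k, Φ (k + 1) = A k * Φ k)
    (O : Matrix (Fin q × Fin p) (Fin n) ℝ)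
    (hO : ∀ (j : Fin q) (i : Fin p) (k : Fin n), O (j, i) k = (C j * Φ j) i k)
    (hrank : ∃ Oinv : Matrix (Fin n) (Fin q × Fin p) ℝ, Oinv * O = 1) :
    ∃ (α : Fin q → Matrix (Fin p) (Fin p) ℝ) (β : Fin q → Matrix (Fin p) (Fin m) ℝ),
      ∀ (x : ℕ → Fin n → ℝ) (u : ℕ → Fin m → ℝ) (z : ℕ → Fin p → ℝ),
        (∀ k, k < q → x (k + 1) = A k *ᵥ x k + B k *ᵥ u k) →
        (∀ k, k ≤ q → z k = C k *ᵥ x k) →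
        z q = ∑ j : Fin q, (α j *ᵥ z j + β j *ᵥ u j) := by
  obtain ⟨Oinv, hOinv⟩ := hrank
  set M : Matrix (Fin p) (Fin q × Fin p) ℝ := C q * Φ q * Oinv with hM
  set α : Fin q → Matrix (Fin p) (Fin p) ℝ :=
    fun j => Matrix.of fun i i' => M i (j, i') with hα
  -- input-influence matrices: effect of `u k` on `z j`
  set W : ℕ → ℕ → Matrix (Fin p) (Fin m) ℝ :=
    fun j k => C j * (transMat n A (k + 1) (j - (k + 1)) * B k) with hWdef
  -- key splitting lemma : `M *ᵥ v` as a sum over the block rows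
  have hsplit : ∀ v : Fin q × Fin p → ℝ,
      M *ᵥ v = ∑ j : Fin q, α j *ᵥ (fun i' => v (j, i')) := by
    intro v
    funext i
    simp only [mulVec, dotProduct, Fintype.sum_prod_type, Finset.sum_apply, hα, Matrix.of_apply]
  refine ⟨α, fun k => W q k -
      ∑ j : Fin q, if (k : ℕ) < (j : ℕ) then α j * W j k else 0, ?_⟩
  intro x u z hx hz
  -- closed-form state formula
  have hstate : ∀ j, j ≤ q → x j = Φ j *ᵥ x 0 +
      ∑ k ∈ range j, (transMat n A (k + 1) (j - (k + 1)) * B k) *ᵥ u k := by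
    intro j hj
    induction j with
    | zero => simp [hΦ0]
    | succ j ih =>
      have hj' : j ≤ q := Nat.le_of_succ_le hj
      rw [hx j (lt_of_lt_of_le (Nat.lt_succ_self j) hj), ih hj']
      rw [Finset.sum_range_succ]
      have h0 : transMat n A (j + 1) (j + 1 - (j + 1)) * B j = B j := by
        simp [transMat]
      rw [h0, mulVec_add, Matrix.mulVec_mulVec, ← hΦ j, add_assoc]
      congr 1
      congr 1
      rw [mulVec_sum']
      refine Finset.sum_congr rfl fun k hk => ?_
      have hk' : k < j := Finset.mem_range.mp hk
      have h1 : j + 1 - (k + 1) = (j - (k + 1)) + 1 := by omega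
      have h2 : (k + 1) + (j - (k + 1)) = j := by omega
      have hA : transMat n A (k + 1) (j + 1 - (k + 1)) =
          A j * transMat n A (k + 1) (j - (k + 1)) := by
        rw [h1]
        show transMat n A (k + 1) ((j - (k + 1)) + 1) = _
        rw [transMat, h2]
      rw [Matrix.mulVec_mulVec, ← Matrix.mul_assoc, hA]
  -- stacked output vector
  set Zv : Fin q × Fin p → ℝ := fun ji => z ji.1 ji.2 with hZv
  set Wv : Fin q × Fin p → ℝ :=
    fun ji => (∑ k ∈ range (ji.1 : ℕ), (W ji.1 k) *ᵥ u k) ji.2 with hWv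
  have hZ : Zv = O *ᵥ x 0 + Wv := by
    funext ji
    obtain ⟨j, i⟩ := ji
    have hjq : (j : ℕ) ≤ q := le_of_lt j.isLt
    have := hz j hjq
    have hxj := hstate j hjq
    have hOrow : (O *ᵥ x 0) (j, i) = ((C (j : ℕ) * Φ (j : ℕ)) *ᵥ x 0) i := by
      simp only [mulVec, dotProduct]
      exact Finset.sum_congr rfl fun k _ => by rw [hO j i k]
    have hCsum : (C (j : ℕ)) *ᵥ (∑ k ∈ range (j : ℕ),
        (transMat n A (k + 1) ((j : ℕ) - (k + 1)) * B k) *ᵥ u k) =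
        ∑ k ∈ range (j : ℕ), (W (j : ℕ) k) *ᵥ u k := by
      rw [mulVec_sum']
      exact Finset.sum_congr rfl fun k _ => by rw [Matrix.mulVec_mulVec, hWdef]
    simp only [hZv, hWv, Pi.add_apply]
    rw [this, hxj, mulVec_add, hCsum, Matrix.mulVec_mulVec, Pi.add_apply, hOrow]
  -- main computation
  have hxq := hstate q le_rfl
  have hzq := hz q le_rfl
  have hCΦ : (C q * Φ q) *ᵥ x 0 = M *ᵥ Zv - M *ᵥ Wv := by
    have hMO : M * O = C q * Φ q := by
      rw [hM, Matrix.mul_assoc, hOinv, Matrix.mul_one]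
    rw [← hMO, ← Matrix.mulVec_mulVec, hZ, mulVec_add, add_sub_cancel_right]
  have hzq' : z q = (C q * Φ q) *ᵥ x 0 + ∑ k ∈ range q, (W q k) *ᵥ u k := by
    have hCsum : (C q) *ᵥ (∑ k ∈ range q,
        (transMat n A (k + 1) (q - (k + 1)) * B k) *ᵥ u k) =
        ∑ k ∈ range q, (W q k) *ᵥ u k := by
      rw [mulVec_sum']
      exact Finset.sum_congr rfl fun k _ => by rw [Matrix.mulVec_mulVec, hWdef]
    rw [hzq, hxq, mulVec_add, hCsum, Matrix.mulVec_mulVec]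
  -- rewrite the two `M *ᵥ` terms via hsplit
  have hMZ : M *ᵥ Zv = ∑ j : Fin q, α j *ᵥ z j := by
    rw [hsplit Zv]
  have hMW : M *ᵥ Wv = ∑ j : Fin q,
      ∑ k ∈ range (j : ℕ), (α j * W j k) *ᵥ u k := by
    rw [hsplit Wv]
    refine Finset.sum_congr rfl fun j _ => ?_
    have : (fun i' => Wv (j, i')) = ∑ k ∈ range (j : ℕ), (W (j : ℕ) k) *ᵥ u k := by
      funext i'
      simp [hWv]
    rw [this, mulVec_sum']
    exact Finset.sum_congr rfl fun k _ => by rw [Matrix.mulVec_mulVec]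
  -- reindex inner range sums to `Fin q` with indicators
  have hinner : ∀ j : Fin q,
      (∑ k ∈ range (j : ℕ), (α j * W j k) *ᵥ u k) =
      ∑ k : Fin q, (if (k : ℕ) < (j : ℕ) then α j * W j (k : ℕ) else 0) *ᵥ u (k : ℕ) := by
    intro j
    have hfilter : (range q).filter (fun k => k < (j : ℕ)) = range (j : ℕ) := by
      ext k
      simp only [Finset.mem_filter, Finset.mem_range]
      constructor
      · rintro ⟨_, h⟩; exact h
      · intro h; exact ⟨lt_of_lt_of_le h (le_of_lt j.isLt), h⟩
    rw [← hfilter, Finset.sum_filter, ← Fin.sum_univ_eq_sum_range]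
    refine Finset.sum_congr rfl fun k _ => ?_
    by_cases h : (k : ℕ) < (j : ℕ) <;> simp [h]
  -- final assembly
  rw [hzq', hCΦ, hMZ, hMW]
  rw [Finset.sum_add_distrib]
  have hβ : ∑ j : Fin q, (W q (j : ℕ) -
      ∑ j' : Fin q, if ((j : ℕ) < (j' : ℕ)) then α j' * W j' (j : ℕ) else 0) *ᵥ u (j : ℕ) =
      (∑ k ∈ range q, (W q k) *ᵥ u k) -
        ∑ j : Fin q, ∑ k ∈ range (j : ℕ), (α j * W j k) *ᵥ u k := by
    have h1 : ∀ j : Fin q, (W q (j : ℕ) -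
        ∑ j' : Fin q, if ((j : ℕ) < (j' : ℕ)) then α j' * W j' (j : ℕ) else 0) *ᵥ u (j : ℕ) =
        (W q (j : ℕ)) *ᵥ u (j : ℕ) -
          ∑ j' : Fin q, (if ((j : ℕ) < (j' : ℕ)) then α j' * W j' (j : ℕ) else 0) *ᵥ u (j : ℕ) := by
      intro j
      rw [Matrix.sub_mulVec, sum_mulVec']
    rw [Finset.sum_congr rfl fun j _ => h1 j, Finset.sum_sub_distrib]
    congr 1
    · rw [← Fin.sum_univ_eq_sum_range (fun k => (W q k) *ᵥ u k) q]
    · rw [Finset.sum_comm]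
      refine Finset.sum_congr rfl fun j _ => ?_
      rw [hinner j]
  rw [hβ]
  abel
end

section
/- Under the hypotheses of the ARMA fitting proposition (i.e., $O^q$ full column rank), the ARMA coefficients may be chosen explicitly as $[\alpha_{t-1} | \cdots | \alpha_{t-q}] = C_t A_{t-1}\cdots A_{t-q} O^{q^+}$ and $[\beta_{t-1}|\cdots|\beta_{t-q}] = -C_t A_{t-1}\cdots A_{t-q} O^{q^+} G^q + [C_t B_{t-1},\; C_t A_{t-1} B_{t-2},\; \ldots,\; C_t A_{t-1}\cdots A_{t-q+1} B_{t-q}]$, and with these coefficients the ARMA relation $\delta z_t = \sum_{i=1}^q \alpha_{t-i}\delta z_{t-i} + \sum_{i=1}^q \beta_{t-i}\delta u_{t-i}$ holds exactly for all system trajectories. -/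
open Matrix

/-!
Unrolling the recursion expresses every output of the window through the initial state and the
inputs, `Z = O x₀ + G U`; since `O` has the left inverse `O⁺`, this recovers `x₀ = O⁺ (Z - G U)`.
Substituting into `z_q = C_q Φ(q,0) x₀ + D U`, which is the same unrolling at time `q`, gives
`z_q = α Z + (-α G + D) U`, and splitting the stacked vectors into their time blocks turns this
into the ARMA relation.
-/

section Trajectory

variable {R n m : Type*} [Semiring R] [Fintype n] [Fintype m] [DecidableEq n]

theorem trajectory_eq_transition_mulVec {A : ℕ → Matrix n n R} {B : ℕ → Matrix n m R}
    {Φ : ℕ → ℕ → Matrix n n R} (hΦdiag : ∀ l, Φ l l = 1)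
    (hΦ : ∀ j l, l ≤ j → Φ (j + 1) l = A j * Φ j l) {x : ℕ → n → R} {u : ℕ → m → R} {N : ℕ}
    (hx : ∀ k, k < N → x (k + 1) = A k *ᵥ x k + B k *ᵥ u k) :
    ∀ k, k ≤ N → x k = Φ k 0 *ᵥ x 0 + ∑ l ∈ Finset.range k, (Φ k (l + 1) * B l) *ᵥ u l := by
  intro k
  induction k with
  | zero => simp [hΦdiag]
  | succ k ih =>
    intro hk
    have hstep : ∀ l ∈ Finset.range k,
        A k *ᵥ (Φ k (l + 1) * B l) *ᵥ u l = (Φ (k + 1) (l + 1) * B l) *ᵥ u l := by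
      intro l hl
      rw [mulVec_mulVec, ← Matrix.mul_assoc, hΦ k (l + 1) (Finset.mem_range.mp hl)]
    rw [hx k hk, ih (Nat.le_of_succ_le hk), mulVec_add, mulVec_sum, mulVec_mulVec,
      ← hΦ k 0 (Nat.zero_le _), Finset.sum_congr rfl hstep, Finset.sum_range_succ, hΦdiag,
      Matrix.one_mul, add_assoc]

end Trajectory

section Stacking

variable {R m ι κ : Type*} [NonUnitalNonAssocSemiring R] [Fintype ι] [Fintype κ]

theorem mulVec_uncurry (M : Matrix m (ι × κ) R) (v : ι → κ → R) :
    M *ᵥ Function.uncurry v = ∑ j, (fun i k => M i (j, k)) *ᵥ v j := by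
  ext i
  simp [mulVec, dotProduct, Fintype.sum_prod_type, Finset.sum_apply]

theorem strictBlockLower_mulVec_apply {q : ℕ} {p : Type*} (G : Matrix (Fin q × p) (Fin q × κ) R)
    (F : ℕ → ℕ → Matrix p κ R)
    (hG : ∀ j i l r, G (j, i) (l, r) = if (l : ℕ) < (j : ℕ) then F j l i r else 0)
    (u : ℕ → κ → R) (j : Fin q) (i : p) :
    (G *ᵥ Function.uncurry fun l : Fin q => u l) (j, i)
      = ∑ l ∈ Finset.range j, (F j l *ᵥ u l) i := by
  have hrange : (Finset.range q).filter (· < (j : ℕ)) = Finset.range j := by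
    ext l
    simp only [Finset.mem_filter, Finset.mem_range]
    omega
  rw [mulVec_uncurry, ← hrange, Finset.sum_filter, ← Fin.sum_univ_eq_sum_range, Finset.sum_apply]
  refine Finset.sum_congr rfl fun l _ => ?_
  by_cases hl : (l : ℕ) < j <;> simp [hl, hG, mulVec, dotProduct]

end Stacking

theorem mulVec_add_mulVec_eq_of_stacked {R s o ι κ : Type*} [Ring R] [Fintype o] [Fintype ι]
    [Fintype κ] (α : Matrix s o R) (O : Matrix o ι R) (G : Matrix o κ R) (D : Matrix s κ R)
    {Z : o → R} {x : ι → R} {U : κ → R} (hZ : Z = O *ᵥ x + G *ᵥ U) :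
    α *ᵥ Z + (-α * G + D) *ᵥ U = (α * O) *ᵥ x + D *ᵥ U := by
  rw [hZ, mulVec_add, mulVec_mulVec, mulVec_mulVec, add_mulVec, Matrix.neg_mul, neg_mulVec]
  abel

theorem stacked_outputs_eq {R n m p : Type*} [Semiring R] [Fintype n] [Fintype m] [DecidableEq n]
    {q : ℕ} {A : ℕ → Matrix n n R} {B : ℕ → Matrix n m R} {C : ℕ → Matrix p n R}
    {Φ : ℕ → ℕ → Matrix n n R} (hΦdiag : ∀ l, Φ l l = 1)
    (hΦ : ∀ j l, l ≤ j → Φ (j + 1) l = A j * Φ j l) {O : Matrix (Fin q × p) n R}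
    (hO : ∀ j i k, O (j, i) k = (C j * Φ j 0) i k) {G : Matrix (Fin q × p) (Fin q × m) R}
    (hG : ∀ j i l r, G (j, i) (l, r) =
      if (l : ℕ) < (j : ℕ) then (C j * Φ j (l + 1) * B l) i r else 0)
    {x : ℕ → n → R} {u : ℕ → m → R} {z : ℕ → p → R}
    (hx : ∀ k, k < q → x (k + 1) = A k *ᵥ x k + B k *ᵥ u k)
    (hz : ∀ k, k < q → z k = C k *ᵥ x k) :
    Function.uncurry (fun j : Fin q => z j)
      = O *ᵥ x 0 + G *ᵥ Function.uncurry (fun l : Fin q => u l) := by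
  ext ⟨j, i⟩
  have hOx : (O *ᵥ x 0) (j, i) = ((C j * Φ j 0) *ᵥ x 0) i := by
    simp [mulVec, dotProduct, hO]
  rw [Pi.add_apply, hOx, strictBlockLower_mulVec_apply G (fun j l => C j * Φ j (l + 1) * B l) hG,
    Function.uncurry_apply_pair, hz j j.2, trajectory_eq_transition_mulVec hΦdiag hΦ hx j j.2.le]
  simp only [mulVec_add, mulVec_sum, mulVec_mulVec, Matrix.mul_assoc, Pi.add_apply,
    Finset.sum_apply]

-- Time is shifted so that `t - q ↦ 0` and `t ↦ q`; `Φ j l` is the transition matrix from `l` to `j`.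
theorem arma_explicit_coefficients_general
    (n m p q : ℕ)
    (A : ℕ → Matrix (Fin n) (Fin n) ℝ)
    (B : ℕ → Matrix (Fin n) (Fin m) ℝ)
    (C : ℕ → Matrix (Fin p) (Fin n) ℝ)
    (Φ : ℕ → ℕ → Matrix (Fin n) (Fin n) ℝ)
    (hΦdiag : ∀ l, Φ l l = 1)
    (hΦ : ∀ j l, l ≤ j → Φ (j + 1) l = A j * Φ j l)
    (O : Matrix (Fin q × Fin p) (Fin n) ℝ)
    (hO : ∀ (j : Fin q) (i : Fin p) (k : Fin n), O (j, i) k = (C j * Φ j 0) i k)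
    (G : Matrix (Fin q × Fin p) (Fin q × Fin m) ℝ)
    (hG : ∀ (j : Fin q) (i : Fin p) (l : Fin q) (r : Fin m),
      G (j, i) (l, r) = if (l : ℕ) < (j : ℕ) then (C j * Φ j (l + 1) * B l) i r else 0)
    (Oplus : Matrix (Fin n) (Fin q × Fin p) ℝ)
    (hOplus : Oplus * O = 1)
    -- explicit coefficient matrices
    (αmat : Matrix (Fin p) (Fin q × Fin p) ℝ)
    (hα : αmat = C q * Φ q 0 * Oplus)
    (D : Matrix (Fin p) (Fin q × Fin m) ℝ)
    (hD : ∀ (i : Fin p) (l : Fin q) (r : Fin m), D i (l, r) = (C q * Φ q (l + 1) * B l) i r)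
    (βmat : Matrix (Fin p) (Fin q × Fin m) ℝ)
    (hβ : βmat = -αmat * G + D) :
    ∀ (x : ℕ → Fin n → ℝ) (u : ℕ → Fin m → ℝ) (z : ℕ → Fin p → ℝ),
      (∀ k, k < q → x (k + 1) = A k *ᵥ x k + B k *ᵥ u k) →
      (∀ k, k ≤ q → z k = C k *ᵥ x k) →
      z q = ∑ j : Fin q,
        ((fun i i' => αmat i (j, i')) *ᵥ z j + (fun i r => βmat i (j, r)) *ᵥ u j) := by
  intro x u z hx hz
  have hαO : αmat * O = C q * Φ q 0 := by rw [hα, Matrix.mul_assoc, hOplus, Matrix.mul_one]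
  have hDU : D *ᵥ Function.uncurry (fun l : Fin q => u l)
      = ∑ l ∈ Finset.range q, (C q * Φ q (l + 1) * B l) *ᵥ u l := by
    rw [mulVec_uncurry, ← Fin.sum_univ_eq_sum_range (fun l => (C q * Φ q (l + 1) * B l) *ᵥ u l)]
    refine Finset.sum_congr rfl fun l _ => congrArg (· *ᵥ u l) ?_
    ext i r
    exact hD i l r
  have hstack := stacked_outputs_eq hΦdiag hΦ hO hG hx fun k hk => hz k hk.le
  rw [Finset.sum_add_distrib, ← mulVec_uncurry, ← mulVec_uncurry, hβ,
    mulVec_add_mulVec_eq_of_stacked αmat O G D hstack, hαO, hDU, hz q le_rfl,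
    trajectory_eq_transition_mulVec hΦdiag hΦ hx q le_rfl]
  simp only [mulVec_add, mulVec_sum, mulVec_mulVec, Matrix.mul_assoc]

/-- Under full column rank of `O^q` (with left inverse `Oplus`), the ARMA
coefficients may be chosen explicitly as
`[α] = C_t A_{t-1}⋯A_{t-q} O^{q+}` and
`[β] = -C_t A_{t-1}⋯A_{t-q} O^{q+} G^q + [C_t B_{t-1}, C_t A_{t-1} B_{t-2}, …]`,
and with these coefficients the order-`q` ARMA relation holds exactly on all trajectories.
Time shifted: `t - q ↦ 0`, `t ↦ q`; `Φ j l` is the state transition matrix from `l` to `j`. -/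
theorem arma_explicit_coefficients
    (n m p q : ℕ) (hq : 0 < q)
    (A : ℕ → Matrix (Fin n) (Fin n) ℝ)
    (B : ℕ → Matrix (Fin n) (Fin m) ℝ)
    (C : ℕ → Matrix (Fin p) (Fin n) ℝ)
    (Φ : ℕ → ℕ → Matrix (Fin n) (Fin n) ℝ)
    (hΦdiag : ∀ l, Φ l l = 1)
    (hΦ : ∀ j l, l ≤ j → Φ (j + 1) l = A j * Φ j l)
    (O : Matrix (Fin q × Fin p) (Fin n) ℝ)
    (hO : ∀ (j : Fin q) (i : Fin p) (k : Fin n), O (j, i) k = (C j * Φ j 0) i k)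
    (G : Matrix (Fin q × Fin p) (Fin q × Fin m) ℝ)
    (hG : ∀ (j : Fin q) (i : Fin p) (l : Fin q) (r : Fin m),
      G (j, i) (l, r) = if (l : ℕ) < (j : ℕ) then (C j * Φ j (l + 1) * B l) i r else 0)
    (Oplus : Matrix (Fin n) (Fin q × Fin p) ℝ)
    (hOplus : Oplus * O = 1)
    -- explicit coefficient matrices
    (αmat : Matrix (Fin p) (Fin q × Fin p) ℝ)
    (hα : αmat = C q * Φ q 0 * Oplus)
    (D : Matrix (Fin p) (Fin q × Fin m) ℝ)
    (hD : ∀ (i : Fin p) (l : Fin q) (r : Fin m), D i (l, r) = (C q * Φ q (l + 1) * B l) i r)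
    (βmat : Matrix (Fin p) (Fin q × Fin m) ℝ)
    (hβ : βmat = -αmat * G + D) :
    ∀ (x : ℕ → Fin n → ℝ) (u : ℕ → Fin m → ℝ) (z : ℕ → Fin p → ℝ),
      (∀ k, k < q → x (k + 1) = A k *ᵥ x k + B k *ᵥ u k) →
      (∀ k, k ≤ q → z k = C k *ᵥ x k) →
      z q = ∑ j : Fin q,
        ((fun i i' => αmat i (j, i')) *ᵥ z j + (fun i r => βmat i (j, r)) *ᵥ u j) :=
  arma_explicit_coefficients_general n m p q A B C Φ hΦdiag hΦ O hO G hG Oplus hOplus αmat hα D hD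
    βmat hβ
end

section
/- Riccati recursion preserves positive semidefiniteness: if $V_{t+1} \succeq 0$, $l_{t,ZZ} \succeq 0$, and $R \succ 0$, then $V_t = l_{t,ZZ} + \mathcal{A}_t^T V_{t+1}\mathcal{A}_t - \mathcal{A}_t^T V_{t+1}\mathcal{B}_t(R + \mathcal{B}_t^T V_{t+1}\mathcal{B}_t)^{-1}\mathcal{B}_t^T V_{t+1}\mathcal{A}_t$ is symmetric positive semidefinite. -/
open Matrix

/-!
The Riccati update is `lZZ` plus the Schur complement of the `R + BᵀVB` block in
`fromBlocks (R + BᵀVB) (BᵀVA) (AᵀVB) (AᵀVA) = fromBlocks R 0 0 0 + [B A]ᵀ V [B A]`.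
Both summands are positive semidefinite and the pivot block is positive definite, so the
Schur complement is positive semidefinite as well.
-/

namespace Matrix

variable {m n p 𝕜 : Type*}

lemma conjTranspose_fromCols_mul_mul_fromCols [Fintype n] [CommRing 𝕜] [StarRing 𝕜]
    (V : Matrix n n 𝕜) (B : Matrix n m 𝕜) (A : Matrix n p 𝕜) :
    (fromCols B A)ᴴ * V * fromCols B A =
      fromBlocks (Bᴴ * V * B) (Bᴴ * V * A) (Aᴴ * V * B) (Aᴴ * V * A) := by
  rw [conjTranspose_fromCols_eq_fromRows_conjTranspose, fromRows_mul, fromRows_mul_fromCols]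

lemma PosSemidef.fromBlocks_zero [Fintype m] [DecidableEq m] [Fintype n] [CommRing 𝕜]
    [PartialOrder 𝕜] [StarRing 𝕜] {S : Matrix m m 𝕜} (hS : S.PosSemidef) :
    (fromBlocks S 0 0 0 : Matrix (m ⊕ n) (m ⊕ n) 𝕜).PosSemidef := by
  convert hS.conjTranspose_mul_mul_same (fromCols (1 : Matrix m m 𝕜) (0 : Matrix m n 𝕜))
    using 1
  rw [conjTranspose_fromCols_mul_mul_fromCols]
  simp

lemma PosSemidef.riccati_schurComplement [Fintype m] [DecidableEq m] [Fintype n] [Fintype p]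
    [Field 𝕜] [PartialOrder 𝕜] [StarRing 𝕜] [StarOrderedRing 𝕜] {V : Matrix n n 𝕜}
    {S : Matrix m m 𝕜} (hV : V.PosSemidef) (hS : S.PosDef) (A : Matrix n p 𝕜)
    (B : Matrix n m 𝕜) :
    (Aᴴ * V * A - Aᴴ * V * B * (S + Bᴴ * V * B)⁻¹ * (Bᴴ * V * A)).PosSemidef := by
  have hPivot : (S + Bᴴ * V * B).PosDef := hS.add_posSemidef (hV.conjTranspose_mul_mul_same B)
  have : Invertible (S + Bᴴ * V * B) := hPivot.isUnit.invertible
  have hCross : (Bᴴ * V * A)ᴴ = Aᴴ * V * B := by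
    rw [conjTranspose_mul, conjTranspose_mul, hV.isHermitian.eq, conjTranspose_conjTranspose,
      Matrix.mul_assoc]
  have hBlock : PosSemidef <|
      fromBlocks (S + Bᴴ * V * B) (Bᴴ * V * A) (Bᴴ * V * A)ᴴ (Aᴴ * V * A) := by
    have hSum := (hS.posSemidef.fromBlocks_zero (n := p)).add
      (hV.conjTranspose_mul_mul_same (fromCols B A))
    rwa [conjTranspose_fromCols_mul_mul_fromCols, fromBlocks_add, zero_add, zero_add, zero_add,
      ← hCross] at hSum
  have hSchur := (hPivot.fromBlocks₁₁ _ _).mp hBlock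
  rwa [hCross] at hSchur

end Matrix

/-- The Riccati recursion preserves positive semidefiniteness: if
`V_{t+1} ⪰ 0`, `l_{t,ZZ} ⪰ 0` and `R ≻ 0`, then
`V_t = l_{t,ZZ} + Aᵀ V_{t+1} A - Aᵀ V_{t+1} B (R + Bᵀ V_{t+1} B)⁻¹ Bᵀ V_{t+1} A ⪰ 0`. -/
theorem riccati_update_posSemidef
    (n m : ℕ)
    (V : Matrix (Fin n) (Fin n) ℝ) (lZZ : Matrix (Fin n) (Fin n) ℝ)
    (R : Matrix (Fin m) (Fin m) ℝ)
    (A : Matrix (Fin n) (Fin n) ℝ) (B : Matrix (Fin n) (Fin m) ℝ)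
    (hV : V.PosSemidef) (hl : lZZ.PosSemidef) (hR : R.PosDef) :
    (lZZ + Aᵀ * V * A - Aᵀ * V * B * (R + Bᵀ * V * B)⁻¹ * Bᵀ * V * A).PosSemidef := by
  have hSchur := hV.riccati_schurComplement hR A B
  simp only [conjTranspose_eq_transpose_of_trivial] at hSchur
  simpa only [add_sub_assoc, Matrix.mul_assoc] using hl.add hSchur
end
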